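/- arXiv:1907.06787 — 11 statements merged into one kernel-verified Lean document; each statement's English description precedes it below -/
import Mathlib

section
/- Let ω : I → ℝ satisfy ω(i) > 0 for all i ∈ I. Let n, m ∈ I, let S, T ⊆ I be finite sets with n ∉ S and m ∉ T, and set v = e_n − ∑_{s∈S} e_s and w = e_m − ∑_{t∈T} e_t. Assume ω(n) − ∑_{s∈S} ω(s) > 0, ω(m) − ∑_{t∈T} ω(t) > 0, and Q(v,w) = 1. Then exactly one of the following holds: (i) n ∈ T, m ∉ S and S ∩ T = ∅, or (ii) m ∈ S, n ∉ T and S ∩ T = ∅. In particular, exactly one basis vector e_i occurs in both v and w, with coefficient +1 in one of them and −1 in the other. -/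
/-- The free ℤ-module with basis {h} ∪ {e_i : i ∈ I}:
the second homology lattice of a blow-up of ℂP². -/
abbrev BlowupLattice (I : Type*) : Type _ := ℤ × (I →₀ ℤ)

/-- The class h of the line. -/
def Hclass {I : Type*} : BlowupLattice I := (1, 0)

/-- The exceptional class e_i. -/
noncomputable def Eclass {I : Type*} (i : I) : BlowupLattice I := (0, Finsupp.single i 1)

/-- The intersection form: Q(h,h) = 1, Q(e_i,e_i) = -1, and all other pairings of
distinct basis vectors vanish. -/
def Qform {I : Type*} (v w : BlowupLattice I) : ℤ :=
  v.1 * w.1 - v.2.sum fun i c => c * w.2 i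

/-!
Expanding bilinearly, `Q(v, w) = [n ∈ T] + [m ∈ S] - [n = m] - #(S ∩ T)`. Positive areas forbid
`n ∈ T` and `m ∈ S` together, since then `ω m ≤ ∑_S ω < ω n ≤ ∑_T ω < ω m`; and `n = m` makes the
right side negative because `n ∉ S`, `m ∉ T`. Hence `Q(v, w) = 1` leaves exactly one of `n ∈ T`,
`m ∈ S`, and forces `S ∩ T = ∅`.
-/

theorem Qform_add_left {I : Type*} (v v' w : BlowupLattice I) :
    Qform (v + v') w = Qform v w + Qform v' w := by
  simp only [Qform, Prod.fst_add, Prod.snd_add]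
  rw [Finsupp.sum_add_index' (fun _ => zero_mul _) (fun _ _ _ => add_mul _ _ _)]
  ring

noncomputable def QformLeft {I : Type*} (w : BlowupLattice I) : BlowupLattice I →+ ℤ :=
  AddMonoidHom.mk' (Qform · w) fun v v' => Qform_add_left v v' w

theorem Qform_Eclass_left {I : Type*} (i : I) (w : BlowupLattice I) :
    Qform (Eclass i) w = -w.2 i := by
  simp [Qform, Eclass]

theorem Eclass_sub_sum_snd_apply {I : Type*} [DecidableEq I] (m : I) (T : Finset I) (i : I) :
    (Eclass m - ∑ t ∈ T, Eclass t).2 i = (if i = m then 1 else 0) - (if i ∈ T then 1 else 0) := by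
  simp [Eclass, Prod.snd_sum, Finsupp.single_apply, eq_comm]

theorem Qform_Eclass_sub_sum {I : Type*} [DecidableEq I] (n m : I) (S T : Finset I) :
    Qform (Eclass n - ∑ s ∈ S, Eclass s) (Eclass m - ∑ t ∈ T, Eclass t) =
      (if n ∈ T then 1 else 0) + (if m ∈ S then 1 else 0) - (if n = m then 1 else 0)
        - ((S ∩ T).card : ℤ) := by
  have h := map_sub (QformLeft (Eclass m - ∑ t ∈ T, Eclass t)) (Eclass n) (∑ s ∈ S, Eclass s)
  rw [map_sum] at h
  simp only [QformLeft, AddMonoidHom.mk'_apply, Qform_Eclass_left,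
    Eclass_sub_sum_snd_apply] at h
  rw [h, Finset.sum_neg_distrib, Finset.sum_sub_distrib, Finset.sum_ite_eq', Finset.sum_boole,
    Finset.filter_mem_eq_inter]
  split_ifs <;> simp <;> ring

theorem not_mem_and_mem_of_sum_lt {I : Type*} {ω : I → ℝ} (hω : ∀ i, 0 ≤ ω i)
    {n m : I} {S T : Finset I} (hS : ∑ s ∈ S, ω s < ω n) (hT : ∑ t ∈ T, ω t < ω m) :
    ¬(n ∈ T ∧ m ∈ S) := by
  rintro ⟨hnT, hmS⟩
  have := Finset.single_le_sum (fun i _ => hω i) hnT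
  have := Finset.single_le_sum (fun i _ => hω i) hmS
  linarith

theorem stmt_1 {I : Type*} [DecidableEq I] (ω : I → ℝ) (hω : ∀ i, 0 < ω i)
    (n m : I) (S T : Finset I) (hnS : n ∉ S) (hmT : m ∉ T)
    (v w : BlowupLattice I)
    (hv : v = Eclass n - ∑ s ∈ S, Eclass s)
    (hw : w = Eclass m - ∑ t ∈ T, Eclass t)
    (hωv : 0 < ω n - ∑ s ∈ S, ω s)
    (hωw : 0 < ω m - ∑ t ∈ T, ω t)
    (hQ : Qform v w = 1) :
    Xor' (n ∈ T ∧ m ∉ S ∧ S ∩ T = ∅) (m ∈ S ∧ n ∉ T ∧ S ∩ T = ∅) := by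
  rw [hv, hw, Qform_Eclass_sub_sum] at hQ
  have hnm : n ≠ m := by
    rintro rfl
    simp [hnS, hmT] at hQ
    omega
  have not_both := not_mem_and_mem_of_sum_lt (fun i => (hω i).le) (sub_pos.1 hωv) (sub_pos.1 hωw)
  rw [if_neg hnm] at hQ
  have hST : S ∩ T = ∅ := by
    rw [← Finset.card_eq_zero]
    split_ifs at hQ with hnT hmS
    · exact absurd ⟨hnT, hmS⟩ not_both
    all_goals omega
  apply xor_def.2
  by_cases hnT : n ∈ T <;> by_cases hmS : m ∈ S <;> simp_all
end

section
/- Let ω : I → ℝ satisfy ω(i) > 0 for all i ∈ I. Let n, m ∈ I, let S, T ⊆ I be finite sets with n ∉ S and m ∉ T, and set v = e_n − ∑_{s∈S} e_s and w = e_m − ∑_{t∈T} e_t. Assume ω(n) − ∑_{s∈S} ω(s) > 0, ω(m) − ∑_{t∈T} ω(t) > 0, and Q(v,w) = 0. Then exactly one of the following holds: (i) n ∉ T, m ∉ S and S ∩ T = ∅ (v and w share no basis vector); (ii) n ∈ T, m ∉ S and |S ∩ T| = 1; or (iii) m ∈ S, n ∉ T and |S ∩ T| = 1. In particular, either v and w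 share no basis vector or they share exactly two: one occurring with coefficient −1 in both, and one occurring with coefficient +1 in one and −1 in the other. -/
/-!
Expanding bilinearly, `Q(v, w) = [n ∈ T] + [m ∈ S] - [n = m] - |S ∩ T|`. Since `n ∉ S` and
`m ∉ T`, the case `n = m` gives `Q(v, w) < 0`. Positivity of the areas rules out
`n ∈ T ∧ m ∈ S`: `m ∈ S` forces `ω m < ω n` and `n ∈ T` forces `ω n < ω m`. In the remaining
cases `Q(v, w) = 0` pins down `|S ∩ T|`.
-/

namespace Qform

variable {I : Type*}

lemma add_left (u v w : BlowupLattice I) : Qform (u + v) w = Qform u w + Qform v w := by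
  simp only [Qform, Prod.fst_add, Prod.snd_add, add_mul]
  rw [Finsupp.sum_add_index' (fun _ => zero_mul _) (fun _ _ _ => add_mul _ _ _)]
  ring

noncomputable def leftHom (w : BlowupLattice I) : BlowupLattice I →+ ℤ :=
  AddMonoidHom.mk' (Qform · w) (add_left · · w)

lemma Eclass_left (i : I) (w : BlowupLattice I) : Qform (Eclass i) w = -w.2 i := by
  simp [Qform, Eclass]

lemma Eclass_sub_sum_left (n : I) (S : Finset I) (w : BlowupLattice I) :
    Qform (Eclass n - ∑ s ∈ S, Eclass s) w = ∑ s ∈ S, w.2 s - w.2 n := by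
  have expand := map_sub (leftHom w) (Eclass n) (∑ s ∈ S, Eclass s)
  simp only [map_sum, leftHom, AddMonoidHom.mk'_apply, Eclass_left, Finset.sum_neg_distrib]
    at expand
  rw [expand]
  ring

variable [DecidableEq I]

lemma snd_Eclass_sub_sum_apply (m : I) (T : Finset I) (i : I) :
    (Eclass m - ∑ t ∈ T, Eclass t).2 i = (if i = m then 1 else 0) - (if i ∈ T then 1 else 0) := by
  simp [Eclass, Prod.snd_sum, Finsupp.single_apply, eq_comm]

lemma sum_snd_Eclass_sub_sum (m : I) (S T : Finset I) :
    ∑ s ∈ S, (Eclass m - ∑ t ∈ T, Eclass t).2 s =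
      (if m ∈ S then 1 else 0) - ((S ∩ T).card : ℤ) := by
  simp only [snd_Eclass_sub_sum_apply, Finset.sum_sub_distrib, Finset.sum_ite_eq',
    Finset.sum_boole, Finset.filter_mem_eq_inter]

lemma Eclass_sub_sum (n m : I) (S T : Finset I) :
    Qform (Eclass n - ∑ s ∈ S, Eclass s) (Eclass m - ∑ t ∈ T, Eclass t) =
      (if n ∈ T then 1 else 0) + (if m ∈ S then 1 else 0) - (if n = m then 1 else 0)
        - ((S ∩ T).card : ℤ) := by
  rw [Eclass_sub_sum_left, sum_snd_Eclass_sub_sum, snd_Eclass_sub_sum_apply]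
  ring

end Qform

theorem stmt_2 {I : Type*} [DecidableEq I] (ω : I → ℝ) (hω : ∀ i, 0 < ω i)
    (n m : I) (S T : Finset I) (hnS : n ∉ S) (hmT : m ∉ T)
    (v w : BlowupLattice I)
    (hv : v = Eclass n - ∑ s ∈ S, Eclass s)
    (hw : w = Eclass m - ∑ t ∈ T, Eclass t)
    (hωv : 0 < ω n - ∑ s ∈ S, ω s)
    (hωw : 0 < ω m - ∑ t ∈ T, ω t)
    (hQ : Qform v w = 0) :
    ((n ∉ T ∧ m ∉ S ∧ S ∩ T = ∅) ∧
      ¬(n ∈ T ∧ m ∉ S ∧ (S ∩ T).card = 1) ∧ ¬(m ∈ S ∧ n ∉ T ∧ (S ∩ T).card = 1)) ∨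
    (¬(n ∉ T ∧ m ∉ S ∧ S ∩ T = ∅) ∧
      (n ∈ T ∧ m ∉ S ∧ (S ∩ T).card = 1) ∧ ¬(m ∈ S ∧ n ∉ T ∧ (S ∩ T).card = 1)) ∨
    (¬(n ∉ T ∧ m ∉ S ∧ S ∩ T = ∅) ∧
      ¬(n ∈ T ∧ m ∉ S ∧ (S ∩ T).card = 1) ∧ (m ∈ S ∧ n ∉ T ∧ (S ∩ T).card = 1)) := by
  have area_lt {a b : I} {U : Finset I} (hU : 0 < ω a - ∑ u ∈ U, ω u) (hb : b ∈ U) :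
      ω b < ω a := by
    linarith [Finset.single_le_sum (fun i _ => (hω i).le) hb]
  rw [hv, hw, Qform.Eclass_sub_sum] at hQ
  have hnm : n ≠ m := by
    rintro rfl
    simp only [hmT, hnS, if_true, if_false] at hQ
    omega
  have not_both : ¬(n ∈ T ∧ m ∈ S) := fun ⟨hnT, hmS⟩ =>
    (area_lt hωv hmS).not_gt (area_lt hωw hnT)
  rw [← Finset.card_eq_zero]
  by_cases hnT : n ∈ T <;> by_cases hmS : m ∈ S <;> simp_all <;> omega
end

section
/- Let ω : I → ℝ satisfy ω(i) > 0 for all i ∈ I. Let k ≥ 1 and let a_1,…,a_k, b_1,…,b_k ∈ I with a_i ≠ b_i for each i; set v_i = e_{a_i} − e_{b_i}. Assume: the indices a_1,…,a_k are pairwise distinct; ω(a_i) > ω(b_i) for each i; Q(v_i, v_{i+1}) = 1 for 1 ≤ i < k; and Q(v_i, v_j) = 0 whenever |i−j| ≥ 2. Then there exist pairwise distinct indices c_1, …, c_{k+1} ∈ I such that either v_i = e_{c_i} − e_{c_{i+1}} for all 1 ≤ i ≤ k, or v_i = e_{c_{i+1}} − e_{c_i} for all 1 ≤ i ≤ k.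 -/
/-!
Intersecting with a (−2)-class `e_x − e_y` only sees the indices `x` and `y`, so
`Q(v_i, v_{i+1}) = 1` forces two consecutive spheres to share an index with opposite signs:
either `b_i = a_{i+1}` (the chain runs forwards) or `a_i = b_{i+1}` (it runs backwards).
The orientation cannot switch: backwards-then-forwards repeats an index `a_i = a_{i+2}`, while
forwards-then-backwards makes `v_i` and `v_{i+2}` share their negative index, so
`Q(v_i, v_{i+2}) = −1 ≠ 0`. The chain is thus a path `c_1, …, c_{k+1}` of indices, and these
are distinct because `ω` is strictly monotone along it.
-/

section Qform

variable {I : Type*}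

lemma Qform_sub_left (u v w : BlowupLattice I) :
    Qform (u - v) w = Qform u w - Qform v w := by
  simp only [Qform, Prod.fst_sub, Prod.snd_sub]
  rw [Finsupp.sum_sub_index fun _ _ _ => sub_mul _ _ _]
  ring

lemma Qform_sub_right (u v w : BlowupLattice I) :
    Qform u (v - w) = Qform u v - Qform u w := by
  simp only [Qform, Prod.fst_sub, Prod.snd_sub, Finsupp.coe_sub, Pi.sub_apply, mul_sub,
    Finsupp.sum_sub]
  ring

lemma Qform_Eclass_Eclass [DecidableEq I] (x y : I) :
    Qform (Eclass x) (Eclass y : BlowupLattice I) = if y = x then -1 else 0 := by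
  by_cases h : y = x <;> simp [Qform, Eclass, Finsupp.single_apply, h, Ne.symm]

lemma Qform_Eclass_sub_Eclass [DecidableEq I] (x y z w : I) :
    Qform (Eclass x - Eclass y : BlowupLattice I) (Eclass z - Eclass w) =
      (if z = y then 1 else 0) + (if w = x then 1 else 0)
        - (if z = x then 1 else 0) - (if w = y then 1 else 0) := by
  simp only [Qform_sub_left, Qform_sub_right, Qform_Eclass_Eclass]
  split_ifs <;> norm_num

lemma eq_or_eq_of_Qform_Eclass_sub_Eclass_eq_one [DecidableEq I] {x y z w : I} (hxz : x ≠ z)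
    (h : Qform (Eclass x - Eclass y : BlowupLattice I) (Eclass z - Eclass w) = 1) :
    y = z ∨ x = w := by
  rw [Qform_Eclass_sub_Eclass] at h
  split_ifs at h <;> first | omega | simp_all

lemma Qform_Eclass_sub_Eclass_same_right [DecidableEq I] {x y z : I} (hxy : x ≠ y)
    (hyz : y ≠ z) (hxz : x ≠ z) :
    Qform (Eclass x - Eclass y : BlowupLattice I) (Eclass z - Eclass y) = -1 := by
  rw [Qform_Eclass_sub_Eclass, if_neg hyz.symm, if_neg hxy.symm, if_neg hxz.symm, if_pos rfl]
  norm_num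

end Qform

lemma forall_or_forall_of_no_switch {k : ℕ} {F B : ℕ → Prop}
    (hstep : ∀ i, 1 ≤ i → i < k → F i ∨ B i)
    (hFB : ∀ i, 1 ≤ i → i + 1 < k → F i → ¬B (i + 1))
    (hBF : ∀ i, 1 ≤ i → i + 1 < k → B i → ¬F (i + 1)) :
    (∀ i, 1 ≤ i → i < k → F i) ∨ (∀ i, 1 ≤ i → i < k → B i) := by
  by_cases hB1 : B 1
  · right
    intro i hi
    induction i, hi using Nat.le_induction with
    | base => exact fun _ => hB1
    | succ n hn ih =>
      intro hnk
      exact (hstep (n + 1) (by omega) hnk).resolve_left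
        (hBF n hn hnk (ih (by omega)))
  · left
    intro i hi
    induction i, hi using Nat.le_induction with
    | base => exact fun hk => (hstep 1 le_rfl hk).resolve_right hB1
    | succ n hn ih =>
      intro hnk
      exact (hstep (n + 1) (by omega) hnk).resolve_right
        (hFB n hn hnk (ih (by omega)))

lemma exists_injOn_path_of_link {I β : Type*} [Preorder β] (f : I → β) (k : ℕ) (a b : ℕ → I)
    (hlink : ∀ i, 1 ≤ i → i < k → b i = a (i + 1))
    (hf : ∀ i, 1 ≤ i → i ≤ k → f (b i) < f (a i)) :
    ∃ c : ℕ → I, (∀ i j, 1 ≤ i → i ≤ k + 1 → 1 ≤ j → j ≤ k + 1 → i ≠ j → c i ≠ c j) ∧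
      ∀ i, 1 ≤ i → i ≤ k → c i = a i ∧ c (i + 1) = b i := by
  set c : ℕ → I := fun i => if i ≤ k then a i else b k
  have hc : ∀ i, 1 ≤ i → i ≤ k → c i = a i ∧ c (i + 1) = b i := by
    intro i hi hik
    refine ⟨if_pos hik, ?_⟩
    rcases hik.lt_or_eq with hlt | rfl
    · simp only [c, if_pos (Nat.succ_le_of_lt hlt), hlink i hi hlt]
    · simp [c]
  have hanti : StrictAntiOn (f ∘ c) (Set.Icc 1 (k + 1)) := by
    refine strictAntiOn_of_succ_lt Set.ordConnected_Icc fun i _ hi hsi => ?_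
    obtain ⟨hci, hci'⟩ := hc i hi.1 (by simpa [Order.succ_eq_add_one] using hsi.2)
    simpa [Order.succ_eq_add_one, hci, hci'] using hf i hi.1 (by simpa using hsi.2)
  refine ⟨c, fun i j hi hik hj hjk hij hcij => hij ?_, hc⟩
  exact hanti.injOn ⟨hi, hik⟩ ⟨hj, hjk⟩ (congrArg f hcij)

theorem stmt_3_general {I : Type*} [DecidableEq I] (ω : I → ℝ)
    (k : ℕ) (a b : ℕ → I)
    (v : ℕ → BlowupLattice I)
    (hv : ∀ i, 1 ≤ i → i ≤ k → v i = Eclass (a i) - Eclass (b i))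
    (hdist : ∀ i j, 1 ≤ i → i ≤ k → 1 ≤ j → j ≤ k → i ≠ j → a i ≠ a j)
    (hωab : ∀ i, 1 ≤ i → i ≤ k → ω (b i) < ω (a i))
    (hcons : ∀ i, 1 ≤ i → i < k → Qform (v i) (v (i + 1)) = 1)
    (hfar : ∀ i j, 1 ≤ i → i ≤ k → 1 ≤ j → j ≤ k → (i + 2 ≤ j ∨ j + 2 ≤ i) →
      Qform (v i) (v j) = 0) :
    ∃ c : ℕ → I,
      (∀ i j, 1 ≤ i → i ≤ k + 1 → 1 ≤ j → j ≤ k + 1 → i ≠ j → c i ≠ c j) ∧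
      ((∀ i, 1 ≤ i → i ≤ k → v i = Eclass (c i) - Eclass (c (i + 1))) ∨
       (∀ i, 1 ≤ i → i ≤ k → v i = Eclass (c (i + 1)) - Eclass (c i))) := by
  have hstep : ∀ i, 1 ≤ i → i < k → b i = a (i + 1) ∨ a i = b (i + 1) := by
    intro i hi hik
    refine eq_or_eq_of_Qform_Eclass_sub_Eclass_eq_one
      (hdist i (i + 1) hi hik.le (by omega) hik (by omega)) ?_
    rw [← hv i hi hik.le, ← hv (i + 1) (by omega) hik]
    exact hcons i hi hik
  have hFB : ∀ i, 1 ≤ i → i + 1 < k → b i = a (i + 1) → a (i + 1) ≠ b (i + 2) := by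
    intro i hi hik hF hB
    have hQ := hfar i (i + 2) hi (by omega) (by omega) (by omega) (Or.inl le_rfl)
    rw [hv i hi (by omega), hv (i + 2) (by omega) (by omega), hF, ← hB,
      Qform_Eclass_sub_Eclass_same_right] at hQ
    · omega
    all_goals exact hdist _ _ (by omega) (by omega) (by omega) (by omega) (by omega)
  have hBF : ∀ i, 1 ≤ i → i + 1 < k → a i = b (i + 1) → b (i + 1) ≠ a (i + 2) :=
    fun i hi hik hB hF =>
      hdist i (i + 2) hi (by omega) (by omega) (by omega) (by omega) (hB.trans hF)
  rcases forall_or_forall_of_no_switch hstep hFB hBF with hlink | hlink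
  · obtain ⟨c, hinj, hc⟩ := exists_injOn_path_of_link ω k a b hlink hωab
    refine ⟨c, hinj, Or.inl fun i hi hik => ?_⟩
    rw [hv i hi hik, (hc i hi hik).1, (hc i hi hik).2]
  · obtain ⟨c, hinj, hc⟩ := exists_injOn_path_of_link (fun x => -ω x) k b a
      hlink fun i hi hik => neg_lt_neg (hωab i hi hik)
    refine ⟨c, hinj, Or.inr fun i hi hik => ?_⟩
    rw [hv i hi hik, (hc i hi hik).1, (hc i hi hik).2]

theorem stmt_3 {I : Type*} [DecidableEq I] (ω : I → ℝ) (hω : ∀ i, 0 < ω i)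
    (k : ℕ) (hk : 1 ≤ k) (a b : ℕ → I)
    (hab : ∀ i, 1 ≤ i → i ≤ k → a i ≠ b i)
    (v : ℕ → BlowupLattice I)
    (hv : ∀ i, 1 ≤ i → i ≤ k → v i = Eclass (a i) - Eclass (b i))
    (hdist : ∀ i j, 1 ≤ i → i ≤ k → 1 ≤ j → j ≤ k → i ≠ j → a i ≠ a j)
    (hωab : ∀ i, 1 ≤ i → i ≤ k → ω (b i) < ω (a i))
    (hcons : ∀ i, 1 ≤ i → i < k → Qform (v i) (v (i + 1)) = 1)
    (hfar : ∀ i j, 1 ≤ i → i ≤ k → 1 ≤ j → j ≤ k → (i + 2 ≤ j ∨ j + 2 ≤ i) →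
      Qform (v i) (v j) = 0) :
    ∃ c : ℕ → I,
      (∀ i j, 1 ≤ i → i ≤ k + 1 → 1 ≤ j → j ≤ k + 1 → i ≠ j → c i ≠ c j) ∧
      ((∀ i, 1 ≤ i → i ≤ k → v i = Eclass (c i) - Eclass (c (i + 1))) ∨
       (∀ i, 1 ≤ i → i ≤ k → v i = Eclass (c (i + 1)) - Eclass (c i))) :=
  stmt_3_general ω k a b v hv hdist hωab hcons hfar
end

section
/- Let k ≥ 1 and let c_1,…,c_{k+1} ∈ I be pairwise distinct; set v_i = e_{c_{i+1}} − e_{c_i} for 1 ≤ i ≤ k. Let v_0 = a_0·h + ∑_{j∈I} b_j·e_j with a_0 ≥ 1, b_j ∈ {0,−1} for all j and only finitely many b_j nonzero. If Q(v_0, v_1) = 1 and Q(v_0, v_i) = 0 for 2 ≤ i ≤ k, then b_{c_2} = b_{c_3} = ⋯ = b_{c_{k+1}} = −1. Consequently, if a_0 = 1 then Q(v_0, v_0) ≤ 1 − k. -/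
lemma sum_mul_single {I : Type*} [DecidableEq I] (b : I →₀ ℤ) (a : I) :
    (b.sum fun j cc => cc * (Finsupp.single a 1) j) = b a := by
  rw [Finsupp.sum]
  simp only [Finsupp.single_apply, mul_ite, mul_one, mul_zero]
  rw [Finset.sum_ite_eq]
  by_cases h : a ∈ b.support
  · simp [h]
  · simp [h, Finsupp.notMem_support_iff.mp h]

theorem stmt_4 {I : Type*} [DecidableEq I]
    (k : ℕ) (hk : 1 ≤ k) (c : ℕ → I)
    (hdist : ∀ i j, 1 ≤ i → i ≤ k + 1 → 1 ≤ j → j ≤ k + 1 → i ≠ j → c i ≠ c j)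
    (v : ℕ → BlowupLattice I)
    (hv : ∀ i, 1 ≤ i → i ≤ k → v i = Eclass (c (i + 1)) - Eclass (c i))
    (a₀ : ℤ) (ha₀ : 1 ≤ a₀) (b : I →₀ ℤ) (hb : ∀ j, b j = 0 ∨ b j = -1)
    (v₀ : BlowupLattice I) (hv₀ : v₀ = a₀ • Hclass + ((0 : ℤ), b))
    (hQ1 : Qform v₀ (v 1) = 1)
    (hQ0 : ∀ i, 2 ≤ i → i ≤ k → Qform v₀ (v i) = 0) :
    (∀ i, 2 ≤ i → i ≤ k + 1 → b (c i) = -1) ∧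
    (a₀ = 1 → Qform v₀ v₀ ≤ 1 - (k : ℤ)) := by
  have hv0 : v₀ = (a₀, b) := by
    rw [hv₀]; simp [Hclass, Prod.ext_iff]
  have hQv : ∀ i, 1 ≤ i → i ≤ k → Qform v₀ (v i) = b (c i) - b (c (i + 1)) := by
    intro i h1 h2
    rw [hv0, hv i h1 h2]
    simp only [Qform, Eclass, Prod.fst_sub, Prod.snd_sub, Finsupp.coe_sub, Pi.sub_apply]
    simp only [mul_sub, Finsupp.sum_sub, sum_mul_single]
    ring
  -- first conclusion
  have key : ∀ i, 2 ≤ i → i ≤ k + 1 → b (c i) = -1 := by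
    intro i h2
    induction i, h2 using Nat.le_induction with
    | base =>
      intro _
      rw [hQv 1 le_rfl hk] at hQ1
      norm_num at hQ1
      rcases hb (c 1) with h1 | h1 <;> rcases hb (c 2) with h2 | h2 <;> omega
    | succ i hi ih =>
      intro hle
      have hik : i ≤ k := by omega
      have h0 := hQ0 i hi hik
      rw [hQv i (by omega) hik] at h0
      have hprev := ih (by omega)
      omega
  refine ⟨key, fun ha1 => ?_⟩
  subst ha1
  rw [hv0]
  simp only [Qform]
  have hsum : (k : ℤ) ≤ b.sum fun j cc => cc * b j := by
    set S := (Finset.Icc 2 (k + 1)).image c with hS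
    have hcard : S.card = k := by
      rw [hS, Finset.card_image_of_injOn, Nat.card_Icc]
      · omega
      · intro i hi j hj hij
        simp only [Finset.coe_Icc, Set.mem_Icc] at hi hj
        by_contra hne
        exact hdist i j (by omega) hi.2 (by omega) hj.2 hne hij
    have hSsub : S ⊆ b.support := by
      intro j hj
      rw [hS, Finset.mem_image] at hj
      obtain ⟨i, hi, rfl⟩ := hj
      simp only [Finset.mem_Icc] at hi
      rw [Finsupp.mem_support_iff, key i hi.1 hi.2]
      omega
    have hone : ∀ j ∈ S, b j * b j = 1 := by
      intro j hj
      rw [hS, Finset.mem_image] at hj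
      obtain ⟨i, hi, rfl⟩ := hj
      simp only [Finset.mem_Icc] at hi
      rw [key i hi.1 hi.2]; norm_num
    have h1 : (∑ j ∈ S, b j * b j) = (k : ℤ) := by
      rw [Finset.sum_congr rfl hone, Finset.sum_const, hcard]; simp
    rw [Finsupp.sum, ← h1]
    exact Finset.sum_le_sum_of_subset_of_nonneg hSsub
      (fun j _ _ => mul_self_nonneg (b j))
  omega
end

section
/- For every integer p ≥ 2, the negative continued fraction [2, …, 2, 3, 2, 2]⁻, whose first p−2 entries equal 2 followed by the entries 3, 2, 2, equals (4p−1)/(4p−5). -/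
/-- Negative continued fraction: `ncf [a₁,…,a_k] = a₁ - 1/ncf [a₂,…,a_k]` and `ncf [a] = a`
(it is well-defined provided every proper suffix has nonzero value; otherwise the
junk value `1/0 = 0` of ℚ is used). -/
def ncf : List ℤ → ℚ
  | [] => 0
  | a :: l => (a : ℚ) - 1 / ncf l

/- Prepending a `2` maps `(c + k d) / (c + (k - 1) d)` to `(c + (k + 1) d) / (c + k d)`, so a chain
of `2`s walks along this arithmetic progression. -/
theorem ncf_replicate_two_append {l : List ℤ} {c d : ℚ} (hc : 0 < c) (hd : 0 ≤ d)
    (hl : ncf l = (c + d) / c) (n : ℕ) :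
    ncf (List.replicate n 2 ++ l) = (c + (n + 1) * d) / (c + n * d) := by
  induction n with
  | zero => simpa using hl
  | succ n ih =>
    have hn : c + n * d ≠ 0 := by positivity
    have hn' : c + (n + 1) * d ≠ 0 := by positivity
    rw [List.replicate_succ, List.cons_append, ncf, ih]
    push_cast
    field_simp
    ring

theorem ncf_three_two_two : ncf [3, 2, 2] = (3 + 4) / 3 := by
  norm_num [ncf]

/-- [2,…,2,3,2,2]⁻ with p−2 leading 2's equals (4p−1)/(4p−5). -/
theorem stmt_10 (p : ℕ) (hp : 2 ≤ p) :
    ncf (List.replicate (p - 2) (2 : ℤ) ++ [3, 2, 2]) =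
      (4 * (p : ℚ) - 1) / (4 * (p : ℚ) - 5) := by
  rw [ncf_replicate_two_append (by norm_num) (by norm_num) ncf_three_two_two,
    Nat.cast_sub hp]
  push_cast
  ring_nf
end

section
/- For every integer ℓ ≥ 0, the negative continued fraction [7, …, 7, 5]⁻ with ℓ entries equal to 7 followed by a final entry 5 equals F_{4ℓ+5}/F_{4ℓ+1}, where F_n is the n-th Fibonacci number. -/
/-- The case `k = 4` of `F_{n+2k} + (-1)^k F_n = L_k F_{n+k}`, with Lucas number `L₄ = 7`. -/
theorem Nat.fib_add_eight_add_fib (n : ℕ) : fib (n + 8) + fib n = 7 * fib (n + 4) := by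
  simp only [fib_add_two]
  ring

theorem ncf_cons_of_eq_div {a : ℤ} {l : List ℤ} {p q : ℚ} (hp : p ≠ 0) (h : ncf l = p / q) :
    ncf (a :: l) = (a * p - q) / p := by
  rw [ncf, h, one_div_div]
  field_simp

/-- [7,…,7,5]⁻ with ℓ entries equal to 7 equals F_{4ℓ+5}/F_{4ℓ+1}. -/
theorem stmt_11 (l : ℕ) :
    ncf (List.replicate l (7 : ℤ) ++ [5]) =
      (Nat.fib (4 * l + 5) : ℚ) / (Nat.fib (4 * l + 1) : ℚ) := by
  induction l with
  | zero => norm_num [ncf]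
  | succ n ih =>
    have hfib : (Nat.fib (4 * n + 5) : ℚ) ≠ 0 := by
      exact_mod_cast (Nat.fib_pos.mpr (by omega)).ne'
    have hlucas : (Nat.fib (4 * n + 9) : ℚ) = 7 * Nat.fib (4 * n + 5) - Nat.fib (4 * n + 1) := by
      rw [eq_sub_iff_add_eq]
      exact_mod_cast Nat.fib_add_eight_add_fib (4 * n + 1)
    rw [List.replicate_succ, List.cons_append, ncf_cons_of_eq_div hfib ih,
      show 4 * (n + 1) + 5 = 4 * n + 9 by ring, show 4 * (n + 1) + 1 = 4 * n + 5 by ring, hlucas]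
    norm_num
end

section
/- Let a_1,…,a_m and b_1,…,b_n be integers all ≥ 2 (with m, n ≥ 1), and suppose every proper suffix of the string (a_1,…,a_m, 1, b_1,…,b_n) has nonzero negative continued fraction value, so that [a_1,…,a_m,1,b_1,…,b_n]⁻ is defined. Then [a_1,…,a_m, 1, b_1,…,b_n]⁻ = 0 if and only if 1/[a_m,…,a_1]⁻ + 1/[b_1,…,b_n]⁻ = 1. -/
theorem sub_inv_eq_inv_iff_eq_inv_sub_inv {K : Type*} [DivisionRing K] (c t x : K) :
    c - t⁻¹ = x⁻¹ ↔ t = (c - x⁻¹)⁻¹ := by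
  rw [← inv_eq_iff_eq_inv (a := t), sub_eq_iff_eq_add', ← sub_eq_iff_eq_add, eq_comm]

theorem ncf_cons (c : ℤ) (l : List ℤ) : ncf (c :: l) = c - (ncf l)⁻¹ := by
  rw [ncf, one_div]

theorem ncf_append_eq_zero_iff (a s : List ℤ) :
    ncf (a ++ s) = 0 ↔ ncf s = (ncf a.reverse)⁻¹ := by
  induction a using List.reverseRecOn generalizing s with
  | nil => simp [ncf]
  | append_singleton a c ih =>
    have hrev : (a ++ [c]).reverse = c :: a.reverse := by simp
    rw [List.append_assoc, List.singleton_append, ih, hrev, ncf_cons, ncf_cons,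
      sub_inv_eq_inv_iff_eq_inv_sub_inv]

theorem stmt_13_general (a b : List ℤ) :
    ncf (a ++ (1 :: b)) = 0 ↔ 1 / ncf a.reverse + 1 / ncf b = 1 := by
  rw [ncf_append_eq_zero_iff, ncf_cons, one_div, one_div]
  push_cast
  constructor <;> intro h <;> linarith

/-- [a₁,…,a_m,1,b₁,…,b_n]⁻ = 0 iff [a_m,…,a₁]⁻ and [b₁,…,b_n]⁻ are dual to each other. -/
theorem stmt_13 (a b : List ℤ) (ha : a ≠ []) (hb : b ≠ [])
    (h2a : ∀ x ∈ a, 2 ≤ x) (h2b : ∀ x ∈ b, 2 ≤ x)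
    (hwd : ∀ s : List ℤ, s ≠ [] → s <:+ (a ++ (1 :: b)) → s ≠ a ++ (1 :: b) → ncf s ≠ 0) :
    ncf (a ++ (1 :: b)) = 0 ↔ 1 / ncf a.reverse + 1 / ncf b = 1 :=
  stmt_13_general a b
end

section
/- Let (a_1,…,a_m) and (b_1,…,b_n) be nonempty lists of integers all ≥ 2, and suppose 1/[a_1,…,a_m]⁻ + 1/[b_1,…,b_n]⁻ = 1. Then ∑_{i=1}^m (a_i − 1) = ∑_{j=1}^n (b_j − 1). -/
lemma ncf_gt_one : ∀ a : List ℤ, a ≠ [] → (∀ x ∈ a, 2 ≤ x) → 1 < ncf a := by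
  intro a
  induction a with
  | nil => intro h; exact absurd rfl h
  | cons x l ih =>
    intro _ h2
    have hx : 2 ≤ x := h2 x (by simp)
    have hx' : (2:ℚ) ≤ (x:ℚ) := by exact_mod_cast hx
    rcases eq_or_ne l [] with rfl | hl
    · simp [ncf]; linarith
    · have hl1 : 1 < ncf l := ih hl (fun y hy => h2 y (by simp [hy]))
      have h0 : (0:ℚ) < 1 / ncf l := by positivity
      have h1 : 1 / ncf l < 1 := by
        rw [div_lt_one (by linarith)]; linarith
      show 1 < (x:ℚ) - 1 / ncf l
      linarith

lemma ncf_bounds (x : ℤ) (l : List ℤ) (hl : l ≠ []) (h2 : ∀ y ∈ x :: l, 2 ≤ y) :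
    (x:ℚ) - 1 < ncf (x :: l) ∧ ncf (x :: l) < (x:ℚ) := by
  have hl1 : 1 < ncf l := ncf_gt_one l hl (fun y hy => h2 y (by simp [hy]))
  have h0 : (0:ℚ) < 1 / ncf l := by positivity
  have h1 : 1 / ncf l < 1 := by rw [div_lt_one (by linarith)]; linarith
  constructor <;> (show _ ; simp only [ncf]) <;> linarith

/-- The reduction step, in the case `ncf (x::t) < 2`. -/
lemma key_step (n : ℕ)
    (ih : ∀ a b : List ℤ, a.length + b.length ≤ n → a ≠ [] → b ≠ [] →
      (∀ x ∈ a, 2 ≤ x) → (∀ x ∈ b, 2 ≤ x) → 1 / ncf a + 1 / ncf b = 1 →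
      (a.map fun x => x - 1).sum = (b.map fun x => x - 1).sum)
    (x y : ℤ) (t s : List ℤ)
    (hlen : (x :: t).length + (y :: s).length ≤ n + 1)
    (h2a : ∀ z ∈ x :: t, 2 ≤ z) (h2b : ∀ z ∈ y :: s, 2 ≤ z)
    (hdual : 1 / ncf (x :: t) + 1 / ncf (y :: s) = 1)
    (hA2 : ncf (x :: t) < 2) :
    ((x :: t).map fun z => z - 1).sum = ((y :: s).map fun z => z - 1).sum := by
  have hA : 1 < ncf (x :: t) := ncf_gt_one _ (by simp) h2a
  have hB : 1 < ncf (y :: s) := ncf_gt_one _ (by simp) h2b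
  have hAne : ncf (x :: t) ≠ 0 := by linarith
  have hBne : ncf (y :: s) ≠ 0 := by linarith
  have hs : ncf (y :: s) + ncf (x :: t) = ncf (x :: t) * ncf (y :: s) := by
    field_simp at hdual; linarith
  have hAB : (ncf (x :: t) - 1) * (ncf (y :: s) - 1) = 1 := by linear_combination -hs
  have hB2 : 2 < ncf (y :: s) := by nlinarith [hAB]
  have ht : t ≠ [] := by
    rintro rfl
    have : (2:ℚ) ≤ (x:ℚ) := by exact_mod_cast h2a x (by simp)
    simp [ncf] at hA2; linarith
  obtain ⟨hxl, hxu⟩ := ncf_bounds x t ht h2a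
  have hx2 : x = 2 := by
    have h1 : 2 ≤ x := h2a x (by simp)
    have h2 : (x:ℚ) < 3 := by linarith
    have h3 : x < 3 := by exact_mod_cast h2
    omega
  have hy3 : 3 ≤ y := by
    have hyb : ncf (y :: s) ≤ (y:ℚ) := by
      rcases eq_or_ne s [] with rfl | hs'
      · simp [ncf]
      · exact le_of_lt (ncf_bounds y s hs' h2b).2
    have h1 : (2:ℚ) < (y:ℚ) := by linarith
    have h2 : (2:ℤ) < y := by exact_mod_cast h1
    omega
  -- reduce to (t, (y-1)::s)
  have hncfb' : ncf ((y - 1) :: s) = ncf (y :: s) - 1 := by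
    simp only [ncf]; push_cast; ring
  have hT : 1 < ncf t := ncf_gt_one t ht (fun z hz => h2a z (by simp [hz]))
  have hTne : ncf t ≠ 0 := by linarith
  have hA' : ncf (x :: t) = 2 - 1 / ncf t := by
    simp only [ncf, hx2]; norm_num
  have hB1ne : ncf (y :: s) - 1 ≠ 0 := by linarith
  have h1 : 1 / (ncf (y :: s) - 1) = ncf (x :: t) - 1 := by
    rw [eq_comm, eq_div_iff hB1ne]; linarith [hAB]
  have hdual' : 1 / ncf t + 1 / ncf ((y - 1) :: s) = 1 := by
    rw [hncfb', h1, hA']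
    field_simp
    ring
  have hrec := ih t ((y - 1) :: s) (by simp at hlen ⊢; omega) ht (by simp)
    (fun z hz => h2a z (by simp [hz]))
    (by
      intro z hz
      rcases List.mem_cons.mp hz with rfl | hz'
      · omega
      · exact h2b z (List.mem_cons_of_mem _ hz'))
    hdual'
  simp only [List.map_cons, List.sum_cons] at hrec ⊢
  rw [hx2]
  linarith [hrec]

lemma key : ∀ n : ℕ, ∀ a b : List ℤ, a.length + b.length ≤ n → a ≠ [] → b ≠ [] →
    (∀ x ∈ a, 2 ≤ x) → (∀ x ∈ b, 2 ≤ x) → 1 / ncf a + 1 / ncf b = 1 →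
    (a.map fun x => x - 1).sum = (b.map fun x => x - 1).sum := by
  intro n
  induction n with
  | zero =>
    intro a b hlen ha
    exact absurd (List.length_eq_zero_iff.mp (by omega)) ha
  | succ n ih =>
    intro a b hlen ha hb h2a h2b hdual
    obtain ⟨x, t, rfl⟩ := List.exists_cons_of_ne_nil ha
    obtain ⟨y, s, rfl⟩ := List.exists_cons_of_ne_nil hb
    have hA : 1 < ncf (x :: t) := ncf_gt_one _ ha h2a
    have hB : 1 < ncf (y :: s) := ncf_gt_one _ hb h2b
    have hAne : ncf (x :: t) ≠ 0 := by linarith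
    have hBne : ncf (y :: s) ≠ 0 := by linarith
    have hsum : ncf (y :: s) + ncf (x :: t) = ncf (x :: t) * ncf (y :: s) := by
      field_simp at hdual; linarith
    have hAB : (ncf (x :: t) - 1) * (ncf (y :: s) - 1) = 1 := by linear_combination -hsum
    rcases lt_trichotomy (ncf (x :: t)) 2 with h | h | h
    · exact key_step n ih x y t s hlen h2a h2b hdual h
    · -- ncf (x :: t) = 2, forces a = [2], b = [2]
      have ht : t = [] := by
        by_contra ht
        obtain ⟨hxl, hxu⟩ := ncf_bounds x t ht h2a
        have hx1 : 2 ≤ x := h2a x (by simp)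
        have h3 : (x:ℚ) < 3 := by linarith
        have h4 : x < 3 := by exact_mod_cast h3
        have hxc : (x:ℚ) = 2 := by
          have : x = 2 := by omega
          exact_mod_cast this
        linarith
      subst ht
      have hxval : ncf [x] = (x:ℚ) := by simp [ncf]
      have hx2 : x = 2 := by
        have : (x:ℚ) = 2 := by rw [← hxval]; exact h
        exact_mod_cast this
      have hBval : ncf (y :: s) = 2 := by nlinarith [hAB, h]
      have hs' : s = [] := by
        by_contra hs'
        obtain ⟨hyl, hyu⟩ := ncf_bounds y s hs' h2b
        have hy1 : 2 ≤ y := h2b y (by simp)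
        have h3 : (y:ℚ) < 3 := by rw [hBval] at hyl; linarith
        have h4 : y < 3 := by exact_mod_cast h3
        have hyc : (y:ℚ) = 2 := by
          have : y = 2 := by omega
          exact_mod_cast this
        linarith
      subst hs'
      have hy2 : y = 2 := by
        have : (y:ℚ) = 2 := by rw [← hBval]; simp [ncf]
        exact_mod_cast this
      simp [hx2, hy2]
    · -- ncf (x :: t) > 2 forces ncf (y :: s) < 2 : symmetric case
      have hBlt : ncf (y :: s) < 2 := by nlinarith [hAB]
      exact (key_step n ih y x s t (by simp at hlen ⊢; omega) h2b h2a
        (by linarith) hBlt).symm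

/-- Dual negative continued fraction expansions satisfy ∑(aᵢ − 1) = ∑(bⱼ − 1). -/
theorem stmt_14 (a b : List ℤ) (ha : a ≠ []) (hb : b ≠ [])
    (h2a : ∀ x ∈ a, 2 ≤ x) (h2b : ∀ x ∈ b, 2 ≤ x)
    (hdual : 1 / ncf a + 1 / ncf b = 1) :
    (a.map fun x => x - 1).sum = (b.map fun x => x - 1).sum :=
  key (a.length + b.length) a b le_rfl ha hb h2a h2b hdual
end

section
/- Let ℓ ≥ 1 and let n_1, …, n_ℓ be integers with n_i ≥ 2 for all i. Then there is at most one index j ∈ {1,…,ℓ} such that the string (n_1, …, n_{j−1}, n_j − 1, n_{j+1}, …, n_ℓ) has a well-defined negative continued fraction value equal to 0; moreover, for such an index j, necessarily n_j = 2. -/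
/-- The string m has a well-defined negative continued fraction value equal to 0:
every nonempty proper suffix has nonzero value, and the value of m itself is 0. -/
def NcfWellDefZero (m : List ℤ) : Prop :=
  (∀ s : List ℤ, s ≠ [] → s <:+ m → s ≠ m → ncf s ≠ 0) ∧ ncf m = 0

/-!
Write `K` for the continuant, the top-left entry of the product of the matrices `!![a, -1; 1, 0]`
over the string; a nonempty string with well-defined value `0` has `K = 0`.
Splitting the decremented string as `x ++ (n - 1) :: w` gives
`K = (n - 1) p q - p q' - p' q` with `p = K x`, `q = K w`, where `0 ≤ p' < p` and `0 ≤ q' < q`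
(all entries being at least `2`) and `p, p'` and `q, q'` are coprime (the matrices have
determinant `1`). Hence `K = 0` forces `n - 1 < 2`, so `n = 2`, and then `p ∣ q` and `q ∣ p`, so
`K x = K w`. Continuants of strings with entries `≥ 2` strictly increase along prefixes and
suffixes, so `K (take j)` increases and `K (drop (j + 1))` decreases with `j`, and they agree
for at most one `j`.
-/

open Matrix

def ncfStep (a : ℤ) : Matrix (Fin 2) (Fin 2) ℤ := !![a, -1; 1, 0]

/-- `ncfMatrix [a₁, …, a_k]` is `!![K (a₁ … a_k), -K (a₁ … a_{k-1}); K (a₂ … a_k), -K (a₂ … a_{k-1})]`,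
with `K` of the empty string `1` and of the string of length `-1` equal to `0`. -/
def ncfMatrix (l : List ℤ) : Matrix (Fin 2) (Fin 2) ℤ := (l.map ncfStep).prod

def continuant (l : List ℤ) : ℤ := ncfMatrix l 0 0

@[simp] lemma ncfMatrix_nil : ncfMatrix [] = 1 := rfl

@[simp] lemma ncfMatrix_cons (a : ℤ) (l : List ℤ) :
    ncfMatrix (a :: l) = ncfStep a * ncfMatrix l := by
  simp [ncfMatrix]

lemma ncfMatrix_append (x y : List ℤ) : ncfMatrix (x ++ y) = ncfMatrix x * ncfMatrix y := by
  simp [ncfMatrix]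

lemma det_ncfMatrix (l : List ℤ) : (ncfMatrix l).det = 1 := by
  induction l with
  | nil => simp
  | cons a l ih => rw [ncfMatrix_cons, det_mul, ih, ncfStep, det_fin_two_of]; ring

lemma continuant_cons (a : ℤ) (l : List ℤ) :
    continuant (a :: l) = a * continuant l - ncfMatrix l 1 0 := by
  simp [continuant, ncfStep, mul_apply, Fin.sum_univ_two, sub_eq_add_neg]

lemma ncfMatrix_cons_one_zero (a : ℤ) (l : List ℤ) :
    ncfMatrix (a :: l) 1 0 = continuant l := by
  simp [continuant, ncfStep, mul_apply, Fin.sum_univ_two]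

lemma continuant_concat (l : List ℤ) (a : ℤ) :
    continuant (l ++ [a]) = a * continuant l + ncfMatrix l 0 1 := by
  simp [continuant, ncfMatrix_append, ncfStep, mul_apply, Fin.sum_univ_two, mul_comm]

lemma ncfMatrix_concat_zero_one (l : List ℤ) (a : ℤ) :
    ncfMatrix (l ++ [a]) 0 1 = -continuant l := by
  simp [continuant, ncfMatrix_append, ncfStep, mul_apply, Fin.sum_univ_two]

lemma continuant_append_cons (x : List ℤ) (m : ℤ) (w : List ℤ) :
    continuant (x ++ m :: w) = m * continuant x * continuant w
      - continuant x * ncfMatrix w 1 0 + ncfMatrix x 0 1 * continuant w := by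
  calc continuant (x ++ m :: w)
      = continuant x * continuant (m :: w) + ncfMatrix x 0 1 * ncfMatrix (m :: w) 1 0 := by
        simp only [continuant, ncfMatrix_append, mul_apply, Fin.sum_univ_two]
    _ = _ := by rw [continuant_cons, ncfMatrix_cons_one_zero]; ring

lemma isCoprime_continuant_ncfMatrix_one_zero (l : List ℤ) :
    IsCoprime (continuant l) (ncfMatrix l 1 0) :=
  ⟨ncfMatrix l 1 1, -ncfMatrix l 0 1, by
    unfold continuant
    linear_combination (det_fin_two (ncfMatrix l)).symm.trans (det_ncfMatrix l)⟩

lemma isCoprime_continuant_ncfMatrix_zero_one (l : List ℤ) :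
    IsCoprime (continuant l) (ncfMatrix l 0 1) :=
  ⟨ncfMatrix l 1 1, -ncfMatrix l 1 0, by
    unfold continuant
    linear_combination (det_fin_two (ncfMatrix l)).symm.trans (det_ncfMatrix l)⟩

lemma ncfMatrix_one_zero_bounds {l : List ℤ} (h : ∀ a ∈ l, 2 ≤ a) :
    0 ≤ ncfMatrix l 1 0 ∧ ncfMatrix l 1 0 < continuant l := by
  induction l with
  | nil => simp [continuant]
  | cons a l ih =>
    obtain ⟨h0, h1⟩ := ih fun b hb => h b (List.mem_cons_of_mem a hb)
    have ha := h a List.mem_cons_self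
    rw [ncfMatrix_cons_one_zero, continuant_cons]
    constructor <;> nlinarith

lemma neg_ncfMatrix_zero_one_bounds {l : List ℤ} (h : ∀ a ∈ l, 2 ≤ a) :
    0 ≤ -ncfMatrix l 0 1 ∧ -ncfMatrix l 0 1 < continuant l := by
  induction l using List.reverseRecOn with
  | nil => simp [continuant]
  | append_singleton l a ih =>
    obtain ⟨h0, h1⟩ := ih fun b hb => h b (List.mem_append_left _ hb)
    have ha := h a (List.mem_append_right _ (List.mem_singleton_self a))
    rw [ncfMatrix_concat_zero_one, continuant_concat, neg_neg]
    constructor <;> nlinarith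

lemma continuant_lt_cons {a : ℤ} {l : List ℤ} (ha : 2 ≤ a) (h : ∀ b ∈ l, 2 ≤ b) :
    continuant l < continuant (a :: l) := by
  obtain ⟨h0, h1⟩ := ncfMatrix_one_zero_bounds h
  rw [continuant_cons]
  nlinarith

lemma continuant_lt_concat {l : List ℤ} {a : ℤ} (h : ∀ b ∈ l, 2 ≤ b) (ha : 2 ≤ a) :
    continuant l < continuant (l ++ [a]) := by
  obtain ⟨h0, h1⟩ := neg_ncfMatrix_zero_one_bounds h
  rw [continuant_concat]
  nlinarith

lemma continuant_lt_of_isSuffix {s l : List ℤ} (h : ∀ a ∈ l, 2 ≤ a) (hs : s <:+ l)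
    (hlen : s.length < l.length) : continuant s < continuant l := by
  obtain ⟨t, rfl⟩ := hs
  induction t with
  | nil => simp at hlen
  | cons a t ih =>
    have ht : ∀ b ∈ t ++ s, 2 ≤ b := fun b hb => h b (List.mem_cons_of_mem a hb)
    calc continuant s ≤ continuant (t ++ s) := by
          rcases t with _ | ⟨b, t⟩
          · rfl
          · exact (ih ht (by simp)).le
      _ < continuant (a :: t ++ s) := continuant_lt_cons (h a List.mem_cons_self) ht

lemma continuant_lt_of_isPrefix {s l : List ℤ} (h : ∀ a ∈ l, 2 ≤ a) (hs : s <+: l)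
    (hlen : s.length < l.length) : continuant s < continuant l := by
  obtain ⟨t, rfl⟩ := hs
  induction t using List.reverseRecOn with
  | nil => simp at hlen
  | append_singleton t a ih =>
    rw [← List.append_assoc] at h ⊢
    have ht : ∀ b ∈ s ++ t, 2 ≤ b := fun b hb => h b (List.mem_append_left _ hb)
    calc continuant s ≤ continuant (s ++ t) := by
          rcases t.eq_nil_or_concat with rfl | ⟨t, b, rfl⟩
          · simp
          · exact (ih ht (by simp)).le
      _ < continuant (s ++ t ++ [a]) :=
        continuant_lt_concat ht (h a (List.mem_append_right _ (List.mem_singleton_self a)))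

lemma Int.eq_one_and_eq_of_mul_mul_eq_add {m p p' q q' : ℤ} (hm : 1 ≤ m)
    (hp' : 0 ≤ p') (hp : p' < p) (hq' : 0 ≤ q') (hq : q' < q)
    (hpp' : IsCoprime p p') (hqq' : IsCoprime q q') (h : m * p * q = p * q' + p' * q) :
    m = 1 ∧ p = q := by
  have hpq : 0 < p * q := mul_pos (by linarith) (by linarith)
  have hm1 : m = 1 := by nlinarith
  subst hm1
  have hpq' : p ∣ q := hpp'.dvd_of_dvd_mul_left ⟨q - q', by linear_combination -h⟩
  have hqp' : q ∣ p := hqq'.dvd_of_dvd_mul_left ⟨p - p', by linear_combination -h⟩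
  exact ⟨rfl, Int.dvd_antisymm (by linarith) (by linarith) hpq' hqp'⟩

lemma eq_one_and_continuant_eq_of_continuant_append_cons_eq_zero {x w : List ℤ} {m : ℤ}
    (hx : ∀ a ∈ x, 2 ≤ a) (hw : ∀ a ∈ w, 2 ≤ a) (hm : 1 ≤ m)
    (h : continuant (x ++ m :: w) = 0) : m = 1 ∧ continuant x = continuant w := by
  obtain ⟨hx0, hx1⟩ := neg_ncfMatrix_zero_one_bounds hx
  obtain ⟨hw0, hw1⟩ := ncfMatrix_one_zero_bounds hw
  rw [continuant_append_cons] at h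
  exact Int.eq_one_and_eq_of_mul_mul_eq_add hm hx0 hx1 hw0 hw1
    (isCoprime_continuant_ncfMatrix_zero_one x).neg_right
    (isCoprime_continuant_ncfMatrix_one_zero w) (by linear_combination h)

lemma ncf_cons_mul_continuant {a : ℤ} {l : List ℤ}
    (h : ∀ s : List ℤ, s ≠ [] → s <:+ a :: l → s ≠ a :: l → ncf s ≠ 0) :
    ncf (a :: l) * continuant l = continuant (a :: l) := by
  induction l generalizing a with
  | nil => simp [ncf, continuant, ncfStep]
  | cons b l ih =>
    have hb : ncf (b :: l) ≠ 0 := h _ (List.cons_ne_nil b l) (List.suffix_cons a _) (by simp)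
    have hl := ih fun s hs hsuf hne => h s hs (hsuf.trans (List.suffix_cons a _)) (by
      rintro rfl
      simpa using hsuf.length_le)
    rw [continuant_cons a, ncfMatrix_cons_one_zero, ncf]
    field_simp
    push_cast
    linear_combination hl

lemma NcfWellDefZero.continuant_eq_zero {m : List ℤ} (hm : m ≠ []) (h : NcfWellDefZero m) :
    continuant m = 0 := by
  obtain ⟨a, l, rfl⟩ := List.exists_cons_of_ne_nil hm
  have hK := ncf_cons_mul_continuant h.1
  rw [h.2, zero_mul] at hK
  exact_mod_cast hK.symm

theorem stmt_15_general (l : List ℤ) (h2 : ∀ a ∈ l, 2 ≤ a) :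
    (∀ j k : ℕ, ∀ hj : j < l.length, ∀ hk : k < l.length,
      NcfWellDefZero (l.set j (l[j]'hj - 1)) → NcfWellDefZero (l.set k (l[k]'hk - 1)) →
      j = k) ∧
    (∀ j : ℕ, ∀ hj : j < l.length,
      NcfWellDefZero (l.set j (l[j]'hj - 1)) → l[j]'hj = 2) := by
  have balanced : ∀ j (hj : j < l.length), NcfWellDefZero (l.set j (l[j] - 1)) →
      l[j] = 2 ∧ continuant (l.take j) = continuant (l.drop (j + 1)) := by
    intro j hj hz
    rw [List.set_eq_take_append_cons_drop, if_pos hj] at hz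
    obtain ⟨hn, heq⟩ := eq_one_and_continuant_eq_of_continuant_append_cons_eq_zero
      (fun a ha => h2 a (List.mem_of_mem_take ha)) (fun a ha => h2 a (List.mem_of_mem_drop ha))
      (by linarith [h2 _ (List.getElem_mem hj)]) (hz.continuant_eq_zero (by simp))
    exact ⟨by linarith, heq⟩
  refine ⟨fun j k hj hk hzj hzk => ?_, fun j hj hz => (balanced j hj hz).1⟩
  by_contra hne
  wlog hjk : j < k generalizing j k
  · exact this k j hk hj hzk hzj (Ne.symm hne) (by omega)
  have htake := continuant_lt_of_isPrefix (fun a ha => h2 a (List.mem_of_mem_take ha))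
    (List.take_prefix_take_left hjk.le) (by simp only [List.length_take]; omega)
  have hdrop := continuant_lt_of_isSuffix (fun a ha => h2 a (List.mem_of_mem_drop ha))
    (List.drop_suffix_drop_left l (Nat.succ_le_succ hjk.le)) (by simp only [List.length_drop]; omega)
  linarith [(balanced j hj hzj).2, (balanced k hk hzk).2]

/-- For a string of integers ≥ 2, at most one single-entry decrement produces a string
with well-defined negative continued fraction value 0, and the decremented entry must be 2. -/
theorem stmt_15 (l : List ℤ) (hl : 1 ≤ l.length) (h2 : ∀ a ∈ l, 2 ≤ a) :
    (∀ j k : ℕ, ∀ hj : j < l.length, ∀ hk : k < l.length,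
      NcfWellDefZero (l.set j (l[j]'hj - 1)) → NcfWellDefZero (l.set k (l[k]'hk - 1)) →
      j = k) ∧
    (∀ j : ℕ, ∀ hj : j < l.length,
      NcfWellDefZero (l.set j (l[j]'hj - 1)) → l[j]'hj = 2) :=
  stmt_15_general l h2
end

section
/- Fix an integer p ≥ 2. In the free ℤ-module with basis h, e_0, e_1, …, e_{2p+2}, equipped with the symmetric bilinear form Q determined by Q(h,h) = 1, Q(e_i,e_i) = −1 and all other pairings of distinct basis vectors equal to 0, let S be the set of vectors: h − e_0 − e_1; e_i − e_{i+1} for i ∈ {1,…,2p−3} ∪ {2p, 2p+1}; e_{2p−2} − e_{2p−1} − e_{2p}; and e_0 − e_1 − ⋯ − e_{p−1}. Then the orthogonal complement of S with respect to Q is exactly the ℤ-span of C_1 = p·h − (p−1)·e_0 − (e_1 + ⋯ + e_{2p−1}) and C_2 = p·h − (p−1)·e_0 − (e_1 + ⋯ + e_{2p−2}) − (e_{2p} + e_{2p+1} + e_{2p+2}); moreover Q(C_1,C_1) = 0, Q(C_2,C_2) = −2 and Q(C_1,C_2) = 1, so Q(x,x) is even for every x orthogonal to S. -/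
/-- The free ℤ-module with basis h, e_0, …, e_{n-1}. -/
abbrev BlowupLat (n : ℕ) : Type := ℤ × (Fin n → ℤ)

/-- The intersection form: Q(h,h) = 1, Q(e_i,e_i) = −1, and all other pairings of distinct
basis vectors vanish. -/
def Qlat {n : ℕ} (v w : BlowupLat n) : ℤ := v.1 * w.1 - ∑ i, v.2 i * w.2 i

/-- The basis vector h. -/
def hLat {n : ℕ} : BlowupLat n := (1, 0)

/-- The basis vector e_i. -/
def eLat {n : ℕ} (i : ℕ) : BlowupLat n := (0, fun j => if (j : ℕ) = i then 1 else 0)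

section helpers
variable {n : ℕ}

lemma Qlat_comm (v w : BlowupLat n) : Qlat v w = Qlat w v := by
  simp only [Qlat, mul_comm]

lemma q_add (x v w : BlowupLat n) : Qlat x (v + w) = Qlat x v + Qlat x w := by
  simp only [Qlat, Prod.fst_add, Prod.snd_add, Pi.add_apply, mul_add, Finset.sum_add_distrib]
  ring

lemma q_sub (x v w : BlowupLat n) : Qlat x (v - w) = Qlat x v - Qlat x w := by
  simp only [Qlat, Prod.fst_sub, Prod.snd_sub, Pi.sub_apply, mul_sub, Finset.sum_sub_distrib]
  ring

lemma q_smul (x : BlowupLat n) (c : ℤ) (v : BlowupLat n) : Qlat x (c • v) = c * Qlat x v := by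
  have h : ∑ i, x.2 i * (c * v.2 i) = c * ∑ i, x.2 i * v.2 i := by
    rw [Finset.mul_sum]; exact Finset.sum_congr rfl fun i _ => mul_left_comm _ _ _
  simp only [Qlat, Prod.smul_fst, Prod.smul_snd, Pi.smul_apply, smul_eq_mul, h]
  ring

lemma q_zero (x : BlowupLat n) : Qlat x 0 = 0 := by simp [Qlat]

lemma q_sum (x : BlowupLat n) (F : Finset ℕ) (f : ℕ → BlowupLat n) :
    Qlat x (∑ j ∈ F, f j) = ∑ j ∈ F, Qlat x (f j) := by
  classical
  induction F using Finset.induction with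
  | empty => simp [q_zero]
  | insert _ _ h ih => rw [Finset.sum_insert h, q_add, ih, Finset.sum_insert h]

lemma q_h (x : BlowupLat n) : Qlat x hLat = x.1 := by simp [Qlat, hLat]

lemma q_e (x : BlowupLat n) (k : ℕ) (hk : k < n) : Qlat x (eLat k) = -x.2 ⟨k, hk⟩ := by
  have h : ∀ i : Fin n, ((i : ℕ) = k) = (i = ⟨k, hk⟩) := fun i => by
    simp [Fin.ext_iff]
  simp only [Qlat, eLat, mul_ite, mul_one, mul_zero, h]
  rw [Finset.sum_ite_eq' Finset.univ (⟨k, hk⟩ : Fin n) x.2]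
  simp

/-- Proof-free component accessor. -/
def gval {n : ℕ} (x : BlowupLat n) (k : ℕ) : ℤ :=
  if hk : k < n then x.2 ⟨k, hk⟩ else 0

lemma q_e' (x : BlowupLat n) (k : ℕ) (hk : k < n) : Qlat x (eLat k) = -gval x k := by
  rw [q_e x k hk]; simp [gval, dif_pos hk]

lemma gval_eq (x : BlowupLat n) (i : Fin n) : x.2 i = gval x (i : ℕ) := by
  simp [gval, dif_pos i.2]

lemma hLat_snd (i : Fin n) : (hLat : BlowupLat n).2 i = 0 := rfl
lemma hLat_fst : (hLat : BlowupLat n).1 = 1 := rfl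
lemma eLat_fst (k : ℕ) : (eLat k : BlowupLat n).1 = 0 := rfl
lemma eLat_snd (k : ℕ) (i : Fin n) : (eLat k : BlowupLat n).2 i = if (i : ℕ) = k then 1 else 0 := rfl

lemma sum_e_fst (F : Finset ℕ) : (∑ j ∈ F, (eLat j : BlowupLat n)).1 = 0 := by
  rw [Prod.fst_sum]; simp [eLat_fst]

lemma sum_e_snd (F : Finset ℕ) (i : Fin n) :
    (∑ j ∈ F, (eLat j : BlowupLat n)).2 i = if (i : ℕ) ∈ F then 1 else 0 := by
  rw [Prod.snd_sum, Finset.sum_apply]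
  simp only [eLat_snd]
  exact Finset.sum_ite_eq F (i : ℕ) (fun _ => 1)

end helpers


set_option maxHeartbeats 1000000 in
theorem stmt_17 (p : ℕ) (hp : 2 ≤ p)
    (S : Set (BlowupLat (2 * p + 3)))
    (hS : S = {hLat - eLat 0 - eLat 1} ∪
        ((fun i : ℕ => eLat i - eLat (i + 1)) ''
          (Set.Icc 1 (2 * p - 3) ∪ {2 * p, 2 * p + 1})) ∪
        {eLat (2 * p - 2) - eLat (2 * p - 1) - eLat (2 * p)} ∪
        {eLat 0 - ∑ j ∈ Finset.Icc 1 (p - 1), eLat j})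
    (C₁ C₂ : BlowupLat (2 * p + 3))
    (hC₁ : C₁ = (p : ℤ) • hLat - ((p : ℤ) - 1) • eLat 0 -
        ∑ j ∈ Finset.Icc 1 (2 * p - 1), eLat j)
    (hC₂ : C₂ = (p : ℤ) • hLat - ((p : ℤ) - 1) • eLat 0 -
        ∑ j ∈ Finset.Icc 1 (2 * p - 2), eLat j -
        (eLat (2 * p) + eLat (2 * p + 1) + eLat (2 * p + 2))) :
    {x : BlowupLat (2 * p + 3) | ∀ s ∈ S, Qlat x s = 0} =
      (Submodule.span ℤ ({C₁, C₂} : Set (BlowupLat (2 * p + 3))) : Set (BlowupLat (2 * p + 3))) ∧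
    Qlat C₁ C₁ = 0 ∧ Qlat C₂ C₂ = -2 ∧ Qlat C₁ C₂ = 1 ∧
    ∀ x : BlowupLat (2 * p + 3), (∀ s ∈ S, Qlat x s = 0) → Even (Qlat x x) := by
  have C1fst : C₁.1 = (p : ℤ) := by
    rw [hC₁]; simp [Prod.fst_sub, Prod.smul_fst, hLat_fst, eLat_fst, sum_e_fst]
  have C2fst : C₂.1 = (p : ℤ) := by
    rw [hC₂]; simp [Prod.fst_sub, Prod.fst_add, Prod.smul_fst, hLat_fst, eLat_fst, sum_e_fst]
  have C1g : ∀ k : ℕ, gval C₁ k =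
      (if k = 0 then -((p:ℤ)-1) else 0) + (if 1 ≤ k ∧ k ≤ 2*p-1 then -1 else 0) := by
    intro k
    by_cases hk : k < 2*p+3
    · rw [gval, dif_pos hk, hC₁]
      simp only [Prod.snd_sub, Prod.smul_snd, Pi.sub_apply, Pi.smul_apply, hLat_snd, eLat_snd,
        sum_e_snd, smul_eq_mul, Finset.mem_Icc]
      split_ifs <;> first | exact (‹False›).elim | omega
    · rw [gval, dif_neg hk]
      split_ifs <;> first | exact (‹False›).elim | omega
  have C2g : ∀ k : ℕ, gval C₂ k =
      (if k = 0 then -((p:ℤ)-1) else 0) + (if 1 ≤ k ∧ k ≤ 2*p-2 then -1 else 0) +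
      (if 2*p ≤ k ∧ k ≤ 2*p+2 then -1 else 0) := by
    intro k
    by_cases hk : k < 2*p+3
    · rw [gval, dif_pos hk, hC₂]
      simp only [Prod.snd_sub, Prod.snd_add, Prod.smul_snd, Pi.sub_apply, Pi.add_apply,
        Pi.smul_apply, hLat_snd, eLat_snd, sum_e_snd, smul_eq_mul, Finset.mem_Icc]
      split_ifs <;> first | exact (‹False›).elim | omega
    · rw [gval, dif_neg hk]
      split_ifs <;> first | exact (‹False›).elim | omega
  -- explicit component values
  have v10 : gval C₁ 0 = -((p:ℤ)-1) := by
    rw [C1g]; split_ifs <;> first | exact (‹False›).elim | omega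
  have v1in : ∀ k : ℕ, 1 ≤ k → k ≤ 2*p-1 → gval C₁ k = -1 := by
    intro k h1 h2; rw [C1g]; split_ifs <;> first | exact (‹False›).elim | omega
  have v1out : ∀ k : ℕ, 2*p ≤ k → gval C₁ k = 0 := by
    intro k h1; rw [C1g]; split_ifs <;> first | exact (‹False›).elim | omega
  have v20 : gval C₂ 0 = -((p:ℤ)-1) := by
    rw [C2g]; split_ifs <;> first | exact (‹False›).elim | omega
  have v2in : ∀ k : ℕ, 1 ≤ k → k ≤ 2*p-2 → gval C₂ k = -1 := by
    intro k h1 h2; rw [C2g]; split_ifs <;> first | exact (‹False›).elim | omega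
  have v2mid : gval C₂ (2*p-1) = 0 := by
    rw [C2g]; split_ifs <;> first | exact (‹False›).elim | omega
  have v2out : ∀ k : ℕ, 2*p ≤ k → k ≤ 2*p+2 → gval C₂ k = -1 := by
    intro k h1 h2; rw [C2g]; split_ifs <;> first | exact (‹False›).elim | omega
  -- C₁ is orthogonal to every element of S
  have hC1S : ∀ s ∈ S, Qlat C₁ s = 0 := by
    intro s hs
    rw [hS] at hs
    rcases hs with ((hs | hs) | hs) | hs
    · simp only [Set.mem_singleton_iff] at hs; subst hs
      rw [q_sub, q_sub, q_h, q_e' C₁ 0 (by omega), q_e' C₁ 1 (by omega), C1fst, v10,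
        v1in 1 le_rfl (by omega)]
      ring
    · obtain ⟨i, hi, rfl⟩ := hs
      simp only [Set.mem_union, Set.mem_Icc, Set.mem_insert_iff, Set.mem_singleton_iff] at hi
      rw [q_sub, q_e' C₁ i (by omega), q_e' C₁ (i+1) (by omega)]
      rcases hi with ⟨hi1, hi2⟩ | rfl | rfl
      · rw [v1in i hi1 (by omega), v1in (i+1) (by omega) (by omega)]; ring
      · rw [v1out (2*p) le_rfl, v1out (2*p+1) (by omega)]; ring
      · rw [v1out (2*p+1) (by omega), v1out (2*p+1+1) (by omega)]; ring
    · simp only [Set.mem_singleton_iff] at hs; subst hs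
      rw [q_sub, q_sub, q_e' C₁ (2*p-2) (by omega), q_e' C₁ (2*p-1) (by omega),
        q_e' C₁ (2*p) (by omega), v1in (2*p-2) (by omega) (by omega),
        v1in (2*p-1) (by omega) (by omega), v1out (2*p) le_rfl]
      ring
    · simp only [Set.mem_singleton_iff] at hs; subst hs
      rw [q_sub, q_e' C₁ 0 (by omega), q_sum, v10]
      have hone : ∀ j ∈ Finset.Icc 1 (p-1), Qlat C₁ (eLat j) = 1 := by
        intro j hj; rw [Finset.mem_Icc] at hj
        rw [q_e' C₁ j (by omega), v1in j hj.1 (by omega)]; ring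
      rw [Finset.sum_congr rfl hone, Finset.sum_const, Nat.card_Icc, nsmul_eq_mul, mul_one]
      omega
  -- C₂ is orthogonal to every element of S
  have hC2S : ∀ s ∈ S, Qlat C₂ s = 0 := by
    intro s hs
    rw [hS] at hs
    rcases hs with ((hs | hs) | hs) | hs
    · simp only [Set.mem_singleton_iff] at hs; subst hs
      rw [q_sub, q_sub, q_h, q_e' C₂ 0 (by omega), q_e' C₂ 1 (by omega), C2fst, v20,
        v2in 1 le_rfl (by omega)]
      ring
    · obtain ⟨i, hi, rfl⟩ := hs
      simp only [Set.mem_union, Set.mem_Icc, Set.mem_insert_iff, Set.mem_singleton_iff] at hi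
      rw [q_sub, q_e' C₂ i (by omega), q_e' C₂ (i+1) (by omega)]
      rcases hi with ⟨hi1, hi2⟩ | rfl | rfl
      · rw [v2in i hi1 (by omega), v2in (i+1) (by omega) (by omega)]; ring
      · rw [v2out (2*p) le_rfl (by omega), v2out (2*p+1) (by omega) (by omega)]; ring
      · rw [v2out (2*p+1) (by omega) (by omega), v2out (2*p+1+1) (by omega) (by omega)]; ring
    · simp only [Set.mem_singleton_iff] at hs; subst hs
      rw [q_sub, q_sub, q_e' C₂ (2*p-2) (by omega), q_e' C₂ (2*p-1) (by omega),
        q_e' C₂ (2*p) (by omega), v2in (2*p-2) (by omega) (by omega), v2mid,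
        v2out (2*p) le_rfl (by omega)]
      ring
    · simp only [Set.mem_singleton_iff] at hs; subst hs
      rw [q_sub, q_e' C₂ 0 (by omega), q_sum, v20]
      have hone : ∀ j ∈ Finset.Icc 1 (p-1), Qlat C₂ (eLat j) = 1 := by
        intro j hj; rw [Finset.mem_Icc] at hj
        rw [q_e' C₂ j (by omega), v2in j hj.1 (by omega)]; ring
      rw [Finset.sum_congr rfl hone, Finset.sum_const, Nat.card_Icc, nsmul_eq_mul, mul_one]
      omega
  -- expansions of Qlat z C₁ and Qlat z C₂
  have qexp1 : ∀ z : BlowupLat (2*p+3), Qlat z C₁ =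
      (p:ℤ) * z.1 + ((p:ℤ)-1) * gval z 0 - ∑ j ∈ Finset.Icc 1 (2*p-1), Qlat z (eLat j) := by
    intro z
    rw [hC₁, q_sub, q_sub, q_smul, q_smul, q_h, q_e' z 0 (by omega), q_sum]
    ring
  have qexp2 : ∀ z : BlowupLat (2*p+3), Qlat z C₂ =
      (p:ℤ) * z.1 + ((p:ℤ)-1) * gval z 0 - ∑ j ∈ Finset.Icc 1 (2*p-2), Qlat z (eLat j) +
      (gval z (2*p) + gval z (2*p+1) + gval z (2*p+2)) := by
    intro z
    rw [hC₂, q_sub, q_sub, q_sub, q_add, q_add, q_smul, q_smul, q_h, q_e' z 0 (by omega),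
      q_sum, q_e' z (2*p) (by omega), q_e' z (2*p+1) (by omega), q_e' z (2*p+2) (by omega)]
    ring
  have sA : ∀ j ∈ Finset.Icc 1 (2*p-1), Qlat C₁ (eLat j) = 1 := by
    intro j hj; rw [Finset.mem_Icc] at hj
    rw [q_e' C₁ j (by omega), v1in j hj.1 hj.2]; ring
  have sB : ∀ j ∈ Finset.Icc 1 (2*p-2), Qlat C₁ (eLat j) = 1 := by
    intro j hj; rw [Finset.mem_Icc] at hj
    rw [q_e' C₁ j (by omega), v1in j hj.1 (by omega)]; ring
  have sC : ∀ j ∈ Finset.Icc 1 (2*p-2), Qlat C₂ (eLat j) = 1 := by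
    intro j hj; rw [Finset.mem_Icc] at hj
    rw [q_e' C₂ j (by omega), v2in j hj.1 hj.2]; ring
  have cardA : ((2*p-1+1-1 : ℕ) : ℤ) = 2*(p:ℤ)-1 := by omega
  have cardB : ((2*p-2+1-1 : ℕ) : ℤ) = 2*(p:ℤ)-2 := by omega
  have QC1C1 : Qlat C₁ C₁ = 0 := by
    rw [qexp1 C₁, C1fst, Finset.sum_congr rfl sA, Finset.sum_const, Nat.card_Icc,
      nsmul_eq_mul, mul_one, cardA, v10]
    ring
  have QC1C2 : Qlat C₁ C₂ = 1 := by
    rw [qexp2 C₁, C1fst, Finset.sum_congr rfl sB, Finset.sum_const, Nat.card_Icc,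
      nsmul_eq_mul, mul_one, cardB, v10, v1out (2*p) le_rfl, v1out (2*p+1) (by omega),
      v1out (2*p+2) (by omega)]
    ring
  have QC2C2 : Qlat C₂ C₂ = -2 := by
    rw [qexp2 C₂, C2fst, Finset.sum_congr rfl sC, Finset.sum_const, Nat.card_Icc,
      nsmul_eq_mul, mul_one, cardB, v20, v2out (2*p) le_rfl (by omega),
      v2out (2*p+1) (by omega) (by omega), v2out (2*p+2) (by omega) (by omega)]
    ring
  have QC2C1 : Qlat C₂ C₁ = 1 := by rw [Qlat_comm]; exact QC1C2
  -- forward direction: every orthogonal vector is a combination of C₁, C₂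
  have recon : ∀ x : BlowupLat (2*p+3), (∀ s ∈ S, Qlat x s = 0) →
      ∃ a b : ℤ, a • C₁ + b • C₂ = x := by
    intro x hx
    have h1 : x.1 + gval x 0 + gval x 1 = 0 := by
      have := hx _ (show (hLat - eLat 0 - eLat 1) ∈ S by rw [hS]; left; left; left; rfl)
      rw [q_sub, q_sub, q_h, q_e' x 0 (by omega), q_e' x 1 (by omega)] at this
      linarith
    have h2 : ∀ i : ℕ, ((1 ≤ i ∧ i ≤ 2*p-3) ∨ i = 2*p ∨ i = 2*p+1) →
        gval x (i+1) = gval x i := by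
      intro i hi
      have hmem : (eLat i - eLat (i+1) : BlowupLat (2*p+3)) ∈ S := by
        rw [hS]; left; left; right
        refine ⟨i, ?_, rfl⟩
        simp only [Set.mem_union, Set.mem_Icc, Set.mem_insert_iff, Set.mem_singleton_iff]
        tauto
      have := hx _ hmem
      rw [q_sub, q_e' x i (by omega), q_e' x (i+1) (by omega)] at this
      linarith
    have h3 : gval x (2*p-2) = gval x (2*p-1) + gval x (2*p) := by
      have := hx _ (show (eLat (2*p-2) - eLat (2*p-1) - eLat (2*p) : BlowupLat (2*p+3)) ∈ S by
        rw [hS]; left; right; rfl)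
      rw [q_sub, q_sub, q_e' x (2*p-2) (by omega), q_e' x (2*p-1) (by omega),
        q_e' x (2*p) (by omega)] at this
      linarith
    have keyG : ∀ j : ℕ, 1 ≤ j → j ≤ 2*p-2 → gval x j = gval x 1 := by
      intro j
      induction j with
      | zero => intro h _; omega
      | succ m ih =>
        intro _ hm2
        rcases Nat.eq_zero_or_pos m with rfl | hm
        · rfl
        · rw [h2 m (Or.inl ⟨hm, by omega⟩), ih hm (by omega)]
    have h4 : gval x 0 = ((p:ℤ)-1) * gval x 1 := by
      have := hx _ (show (eLat 0 - ∑ j ∈ Finset.Icc 1 (p-1), eLat j : BlowupLat (2*p+3)) ∈ S by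
        rw [hS]; right; rfl)
      rw [q_sub, q_e' x 0 (by omega), q_sum] at this
      have hsum : ∑ j ∈ Finset.Icc 1 (p-1), Qlat x (eLat j) = -(((p:ℤ)-1) * gval x 1) := by
        have hterm : ∀ j ∈ Finset.Icc 1 (p-1), Qlat x (eLat j) = -gval x 1 := by
          intro j hj; rw [Finset.mem_Icc] at hj
          rw [q_e' x j (by omega), keyG j hj.1 (by omega)]
        rw [Finset.sum_congr rfl hterm, Finset.sum_const, Nat.card_Icc, nsmul_eq_mul]
        have hcast : ((p-1+1-1 : ℕ) : ℤ) = (p:ℤ)-1 := by omega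
        rw [hcast]; ring
      rw [hsum] at this
      linarith
    have etop : x.1 = -(p:ℤ) * gval x 1 := by linarith [h1, h4]
    have e3 : gval x (2*p-1) = gval x 1 - gval x (2*p) := by
      have := keyG (2*p-2) (by omega) (by omega)
      linarith [h3]
    have e2p1 : gval x (2*p+1) = gval x (2*p) := h2 (2*p) (Or.inr (Or.inl rfl))
    have e2p2 : gval x (2*p+2) = gval x (2*p+1) := h2 (2*p+1) (Or.inr (Or.inr rfl))
    refine ⟨gval x (2*p) - gval x 1, -gval x (2*p), ?_⟩
    have hfst : ((gval x (2*p) - gval x 1) • C₁ + (-gval x (2*p)) • C₂).1 = x.1 := by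
      simp only [Prod.fst_add, Prod.smul_fst, smul_eq_mul, C1fst, C2fst]
      linear_combination -etop
    have hsnd : ((gval x (2*p) - gval x 1) • C₁ + (-gval x (2*p)) • C₂).2 = x.2 := by
      funext i
      simp only [Prod.snd_add, Pi.add_apply, Prod.smul_snd, Pi.smul_apply, smul_eq_mul]
      rw [gval_eq x i, gval_eq C₁ i, gval_eq C₂ i, C1g, C2g]
      have hilt : (i : ℕ) < 2*p+3 := i.2
      rcases (show (i:ℕ) = 0 ∨ (1 ≤ (i:ℕ) ∧ (i:ℕ) ≤ 2*p-2) ∨ (i:ℕ) = 2*p-1 ∨ (i:ℕ) = 2*p ∨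
          (i:ℕ) = 2*p+1 ∨ (i:ℕ) = 2*p+2 from by omega) with hc | hc | hc | hc | hc | hc
      · rw [hc]
        split_ifs <;> first | exact (‹False›).elim | (exfalso; omega) | linear_combination -h4
      · rw [keyG (i:ℕ) hc.1 hc.2]
        split_ifs <;> first | exact (‹False›).elim | (exfalso; omega) | ring
      · rw [hc, e3]
        split_ifs <;> first | exact (‹False›).elim | (exfalso; omega) | ring
      · rw [hc]
        split_ifs <;> first | exact (‹False›).elim | (exfalso; omega) | ring
      · rw [hc, e2p1]
        split_ifs <;> first | exact (‹False›).elim | (exfalso; omega) | ring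
      · rw [hc, e2p2, e2p1]
        split_ifs <;> first | exact (‹False›).elim | (exfalso; omega) | ring
    exact Prod.ext hfst hsnd
  refine ⟨?_, QC1C1, QC2C2, QC1C2, ?_⟩
  · ext x
    simp only [Set.mem_setOf_eq, SetLike.mem_coe]
    constructor
    · intro hx
      exact Submodule.mem_span_pair.mpr (recon x hx)
    · intro hx s hs
      obtain ⟨a, b, rfl⟩ := Submodule.mem_span_pair.mp hx
      rw [Qlat_comm, q_add, q_smul, q_smul, Qlat_comm s C₁, Qlat_comm s C₂,
        hC1S s hs, hC2S s hs]
      ring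
  · intro x hx
    obtain ⟨a, b, rfl⟩ := recon x hx
    have E1 : Qlat (a • C₁ + b • C₂) C₁ = a * Qlat C₁ C₁ + b * Qlat C₁ C₂ := by
      rw [Qlat_comm, q_add, q_smul, q_smul]
    have E2 : Qlat (a • C₁ + b • C₂) C₂ = a * Qlat C₂ C₁ + b * Qlat C₂ C₂ := by
      rw [Qlat_comm, q_add, q_smul, q_smul, Qlat_comm C₂ C₁]
    refine ⟨a*b - b*b, ?_⟩
    rw [q_add, q_smul, q_smul, E1, E2, QC1C1, QC1C2, QC2C1, QC2C2]
    ring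
end

section
/- Fix an integer p ≥ 2. In the free ℤ-module with basis h, e_0, e_1, …, e_{2p+2}, equipped with the symmetric bilinear form Q determined by Q(h,h) = 1, Q(e_i,e_i) = −1 and all other pairings of distinct basis vectors equal to 0, let S be the set of vectors: h; h − e_0 − e_1; e_i − e_{i+1} for i ∈ {1,…,2p−3} ∪ {2p, 2p+1}; e_{2p−2} − e_{2p−1} − e_{2p}; and e_0 − e_1 − ⋯ − e_{p−1}. Then the orthogonal complement of S with respect to Q is exactly the ℤ-span of the single vector e_{2p−1} − e_{2p} − e_{2p+1} − e_{2p+2} (which has square −4). -/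
/-!
Pairing with `h` and with `e_k` reads off the coordinates of a vector, so orthogonality to `S`
is a linear system in the coordinates `a_k` of `x`: the `h`-coordinate vanishes,
`a_0 + a_1 = 0`, `a_1 = ⋯ = a_{2p-2}`, `a_{2p} = a_{2p+1} = a_{2p+2}`,
`a_{2p-1} + a_{2p} = a_{2p-2}` and `a_0 = a_1 + ⋯ + a_{p-1} = (p - 1) a_1`.
Hence `p a_1 = 0`, so `a_0 = ⋯ = a_{2p-2} = 0` and
`x = a_{2p-1} (e_{2p-1} - e_{2p} - e_{2p+1} - e_{2p+2})`.
-/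

namespace BlowupLat

variable {n : ℕ}

/-- The coefficient of `e_k`, extended by `0` to all `k : ℕ` like `eLat`. -/
def coord (x : BlowupLat n) (k : ℕ) : ℤ := if h : k < n then x.2 ⟨k, h⟩ else 0

theorem ext_coord {x y : BlowupLat n} (h1 : x.1 = y.1) (h2 : ∀ k < n, coord x k = coord y k) :
    x = y :=
  Prod.ext h1 <| funext fun k => by simpa [coord, k.2] using h2 k k.2

@[simp] theorem coord_sub (x y : BlowupLat n) (k : ℕ) :
    coord (x - y) k = coord x k - coord y k := by
  unfold coord; split_ifs <;> simp

@[simp] theorem coord_smul (c : ℤ) (x : BlowupLat n) (k : ℕ) :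
    coord (c • x) k = c * coord x k := by
  unfold coord; split_ifs <;> simp

theorem coord_eLat {a : ℕ} (ha : a < n) (k : ℕ) :
    coord (eLat a : BlowupLat n) k = if k = a then 1 else 0 := by
  unfold coord eLat; split_ifs <;> simp_all

def Qform : LinearMap.BilinForm ℤ (BlowupLat n) :=
  LinearMap.mk₂ ℤ Qlat
    (fun x y z => by
      simp only [Qlat, Prod.fst_add, Prod.snd_add, Pi.add_apply, add_mul, Finset.sum_add_distrib]
      ring)
    (fun c x y => by
      simp only [Qlat, Prod.smul_fst, Prod.smul_snd, Pi.smul_apply, smul_eq_mul, mul_assoc,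
        ← Finset.mul_sum]
      ring)
    (fun x y z => by
      simp only [Qlat, Prod.fst_add, Prod.snd_add, Pi.add_apply, mul_add, Finset.sum_add_distrib]
      ring)
    (fun c x y => by
      simp only [Qlat, Prod.smul_fst, Prod.smul_snd, Pi.smul_apply, smul_eq_mul,
        mul_left_comm _ c, ← Finset.mul_sum]
      ring)

theorem Qlat_sub_right (x y z : BlowupLat n) : Qlat x (y - z) = Qlat x y - Qlat x z :=
  (Qform x).map_sub y z

theorem Qlat_sum_right (x : BlowupLat n) (s : Finset ℕ) (y : ℕ → BlowupLat n) :
    Qlat x (∑ j ∈ s, y j) = ∑ j ∈ s, Qlat x (y j) :=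
  map_sum (Qform x) y s

theorem Qlat_smul_left (c : ℤ) (x y : BlowupLat n) : Qlat (c • x) y = c * Qlat x y :=
  Qform.map_smul₂ c x y

theorem Qlat_hLat (x : BlowupLat n) : Qlat x hLat = x.1 := by
  simp [Qlat, hLat]

theorem Qlat_eLat (x : BlowupLat n) (k : ℕ) : Qlat x (eLat k) = -coord x k := by
  simp only [Qlat, eLat, coord, mul_zero, mul_ite, mul_one, zero_sub, neg_inj]
  split_ifs with hk
  · rw [Finset.sum_eq_single ⟨k, hk⟩] <;> simp +contextual [Fin.ext_iff]
  · exact Finset.sum_eq_zero fun j _ => if_neg (by omega)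

end BlowupLat

theorem eq_of_forall_eq_succ {α : Type*} {a : ℕ → α} {l r : ℕ}
    (h : ∀ i ∈ Finset.Ico l r, a i = a (i + 1)) : ∀ j ∈ Finset.Icc l r, a j = a l := by
  intro j hj
  rw [Finset.mem_Icc] at hj
  induction j, hj.1 using Nat.le_induction with
  | base => rfl
  | succ j hlj ih =>
    rw [← h j (Finset.mem_Ico.2 ⟨hlj, by omega⟩), ih ⟨hlj, by omega⟩]

open BlowupLat

def totalTransform (p : ℕ) : Set (BlowupLat (2 * p + 3)) :=
  {hLat} ∪ {hLat - eLat 0 - eLat 1} ∪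
    ((fun i : ℕ => eLat i - eLat (i + 1)) '' (Set.Icc 1 (2 * p - 3) ∪ {2 * p, 2 * p + 1})) ∪
    {eLat (2 * p - 2) - eLat (2 * p - 1) - eLat (2 * p)} ∪
    {eLat 0 - ∑ j ∈ Finset.Icc 1 (p - 1), eLat j}

def sphereClass (p : ℕ) : BlowupLat (2 * p + 3) :=
  eLat (2 * p - 1) - eLat (2 * p) - eLat (2 * p + 1) - eLat (2 * p + 2)

variable {p : ℕ}

theorem fst_sphereClass : (sphereClass p).1 = 0 := by
  simp [sphereClass, eLat]

theorem coord_sphereClass (k : ℕ) : coord (sphereClass p) k =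
    (if k = 2 * p - 1 then 1 else 0) - (if k = 2 * p then 1 else 0) -
      (if k = 2 * p + 1 then 1 else 0) - (if k = 2 * p + 2 then 1 else 0) := by
  simp only [sphereClass, coord_sub]
  rw [coord_eLat (by omega), coord_eLat (by omega), coord_eLat (by omega), coord_eLat (by omega)]

theorem Qlat_sphereClass_self (hp : 0 < p) : Qlat (sphereClass p) (sphereClass p) = -4 := by
  conv_lhs => rhs; unfold sphereClass
  simp only [Qlat_sub_right, Qlat_eLat, coord_sphereClass]
  grind

theorem Qlat_sphereClass_of_mem (hp : 2 ≤ p) :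
    ∀ s ∈ totalTransform p, Qlat (sphereClass p) s = 0 := by
  simp only [totalTransform, Set.mem_union, Set.mem_singleton_iff, Set.mem_image, Set.mem_Icc,
    Set.mem_insert_iff]
  rintro s ((((rfl | rfl) | ⟨i, hi, rfl⟩) | rfl) | rfl)
  · rw [Qlat_hLat, fst_sphereClass]
  · simp only [Qlat_sub_right, Qlat_hLat, Qlat_eLat, coord_sphereClass, fst_sphereClass]; grind
  · simp only [Qlat_sub_right, Qlat_eLat, coord_sphereClass]; grind
  · simp only [Qlat_sub_right, Qlat_eLat, coord_sphereClass]; grind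
  · rw [Qlat_sub_right, Qlat_sum_right, Qlat_eLat, coord_sphereClass]
    rw [Finset.sum_eq_zero fun j hj => by
      rw [Finset.mem_Icc] at hj; rw [Qlat_eLat, coord_sphereClass]; grind]
    grind

theorem coord_of_orthogonal (hp : 2 ≤ p) {x : BlowupLat (2 * p + 3)}
    (hx : ∀ s ∈ totalTransform p, Qlat x s = 0) :
    x.1 = 0 ∧ (∀ k ≤ 2 * p - 2, coord x k = 0) ∧
      ∀ k ∈ Finset.Icc (2 * p) (2 * p + 2), coord x k = -coord x (2 * p - 1) := by
  simp only [totalTransform, Set.mem_union, Set.mem_singleton_iff, or_imp, forall_and,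
    forall_eq, Set.forall_mem_image, Set.forall_mem_insert, Set.mem_Icc, Qlat_sub_right,
    Qlat_sum_right, Qlat_hLat, Qlat_eLat, Finset.sum_neg_distrib] at hx
  obtain ⟨⟨⟨⟨hfst, h01⟩, hchain, hend₀, hend₁⟩, hbranch⟩, hsum⟩ := hx
  set a := coord x
  have hconst : ∀ j ∈ Finset.Icc 1 (2 * p - 2), a j = a 1 :=
    eq_of_forall_eq_succ fun i hi => by
      rw [Finset.mem_Ico] at hi
      linarith [hchain i ⟨hi.1, by omega⟩]
  have hsum' : ∑ j ∈ Finset.Icc 1 (p - 1), a j = (p - 1) * a 1 := by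
    rw [Finset.sum_congr rfl fun j hj => hconst j (by rw [Finset.mem_Icc] at hj ⊢; omega),
      Finset.sum_const, Nat.card_Icc, nsmul_eq_mul]
    congr 1
    omega
  have ha1 : a 1 = 0 := by
    have : (p : ℤ) * a 1 = 0 := by linarith
    exact (mul_eq_zero.1 this).resolve_left (by positivity)
  refine ⟨hfst, fun k hk => ?_, fun k hk => ?_⟩
  · rcases Nat.eq_zero_or_pos k with rfl | hk0
    · linarith
    · rw [hconst k (Finset.mem_Icc.2 ⟨hk0, hk⟩), ha1]
  · have h2p2 : a (2 * p - 2) = 0 := by rw [hconst _ (Finset.mem_Icc.2 ⟨by omega, le_rfl⟩), ha1]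
    rw [Finset.mem_Icc] at hk
    obtain rfl | rfl | rfl : k = 2 * p ∨ k = 2 * p + 1 ∨ k = 2 * p + 2 := by omega
    all_goals linarith

theorem eq_smul_sphereClass_of_orthogonal (hp : 2 ≤ p) {x : BlowupLat (2 * p + 3)}
    (hx : ∀ s ∈ totalTransform p, Qlat x s = 0) : x = coord x (2 * p - 1) • sphereClass p := by
  obtain ⟨hfst, hlow, hhigh⟩ := coord_of_orthogonal hp hx
  refine ext_coord (by simp [hfst, fst_sphereClass]) fun k hk => ?_
  rw [coord_smul, coord_sphereClass]
  rcases le_or_gt k (2 * p - 2) with hk' | hk'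
  · rw [hlow k hk']; grind
  · rcases eq_or_ne k (2 * p - 1) with rfl | hk''
    · grind
    · rw [hhigh k (Finset.mem_Icc.2 ⟨by omega, by omega⟩)]; grind

theorem stmt_18 (p : ℕ) (hp : 2 ≤ p)
    (S : Set (BlowupLat (2 * p + 3)))
    (hS : S = {hLat} ∪ {hLat - eLat 0 - eLat 1} ∪
        ((fun i : ℕ => eLat i - eLat (i + 1)) ''
          (Set.Icc 1 (2 * p - 3) ∪ {2 * p, 2 * p + 1})) ∪
        {eLat (2 * p - 2) - eLat (2 * p - 1) - eLat (2 * p)} ∪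
        {eLat 0 - ∑ j ∈ Finset.Icc 1 (p - 1), eLat j})
    (v : BlowupLat (2 * p + 3))
    (hv : v = eLat (2 * p - 1) - eLat (2 * p) - eLat (2 * p + 1) - eLat (2 * p + 2)) :
    {x : BlowupLat (2 * p + 3) | ∀ s ∈ S, Qlat x s = 0} =
      (Submodule.span ℤ ({v} : Set (BlowupLat (2 * p + 3))) : Set (BlowupLat (2 * p + 3))) ∧
    Qlat v v = -4 := by
  obtain rfl : S = totalTransform p := hS
  obtain rfl : v = sphereClass p := hv
  refine ⟨Set.ext fun x => ⟨fun hx => ?_, ?_⟩, Qlat_sphereClass_self (by omega)⟩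
  · exact Submodule.mem_span_singleton.2 ⟨_, (eq_smul_sphereClass_of_orthogonal hp hx).symm⟩
  · rintro hx s hs
    obtain ⟨c, rfl⟩ := Submodule.mem_span_singleton.1 hx
    rw [Qlat_smul_left, Qlat_sphereClass_of_mem hp s hs, mul_zero]
end
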